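/- Let Γ be a group generated by a finite symmetric set S = S⁻¹ ⊆ Γ with Føl(n) < ∞ for every n ∈ ℕ (i.e. Γ is amenable), and let g : (0,∞) → (0,∞) be a strictly increasing differentiable function with tame superpolynomial growth (TSPG) such that γ_S(r−1) ≥ g(r) for every integer r ≥ 1. Then for every ε ∈ (0,1) there exists N ∈ ℕ such that Føl(n) ≥ g((1−ε)·n) for every integer n ≥ N. -/

import Mathlib

open scoped Pointwise

variable {G : Type*} [Group G] [DecidableEq G]

/-- The ball of radius `r` in the word metric: elements of `G` expressible as
a product of at most `r` elements of `S`. -/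
def wordBall (S : Finset G) : ℕ → Finset G
  | 0 => {1}
  | r + 1 => wordBall S r ∪ S * wordBall S r

/-- The inner boundary of a finite set `D` with respect to the generating set `S`. -/
def innerBoundary (S D : Finset G) : Finset G :=
  D.filter fun x => ∃ s ∈ S, s * x ∉ D


/-- The Følner function of `(G,S)`: the smallest cardinality of a finite nonempty
set `D` with `n·|∂_S D| ≤ |D|`, or `∞` if no such set exists. -/
noncomputable def folner (S : Finset G) (n : ℕ) : ℕ∞ :=
  ⨅ (D : Finset G) (_ : D.Nonempty) (_ : n * (innerBoundary S D).card ≤ D.card),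
    (D.card : ℕ∞)

/-!
Let `D` be a Følner set with `n·|∂D| ≤ |D|` and `m ≤ (1 - δ) n`. Each `w ∈ B(m)` moves at
most `m·|∂D| ≤ (1 - δ)|D|` points of `D` out of `D`, so `|D ∩ wD| ≥ δ|D|`; summing over `B(m)`
and using `∑_w |D ∩ wD| ≤ |D|²` gives `δ·|B(m)| ≤ |D|`, hence `Føl(n) ≥ δ·g((1 - δ)n)`.
Tame superpolynomial growth makes `log g r - M log r` eventually increasing for every `M`,
so `g(λt) ≤ δ g(t)` for large `t`; with `λ = (1 - ε)/(1 - δ)` this absorbs the factor `δ`.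
-/

open Finset Filter

lemma card_sdiff_mul_smul_le (D : Finset G) (a b : G) :
    #(D \ (a * b) • D) ≤ #(D \ a • D) + #(D \ b • D) :=
  calc #(D \ (a * b) • D) ≤ #(D \ a • D ∪ a • D \ (a * b) • D) :=
        card_le_card (sdiff_triangle _ _ _)
    _ ≤ #(D \ a • D) + #(a • D \ (a * b) • D) := card_union_le _ _
    _ = #(D \ a • D) + #(D \ b • D) := by
        rw [mul_smul, ← smul_finset_sdiff, card_smul_finset]

lemma card_sdiff_smul_le_card_innerBoundary {S : Finset G} (hsymm : ∀ s ∈ S, s⁻¹ ∈ S)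
    (D : Finset G) {s : G} (hs : s ∈ S) : #(D \ s • D) ≤ #(innerBoundary S D) := by
  refine card_le_card fun x hx => ?_
  rw [Finset.mem_sdiff, ← inv_smul_mem_iff, smul_eq_mul] at hx
  exact mem_filter.2 ⟨hx.1, s⁻¹, hsymm s hs, hx.2⟩

lemma card_sdiff_smul_le_of_mem_wordBall {S : Finset G} (hsymm : ∀ s ∈ S, s⁻¹ ∈ S)
    (D : Finset G) {m : ℕ} {w : G} (hw : w ∈ wordBall S m) :
    #(D \ w • D) ≤ m * #(innerBoundary S D) := by
  induction m generalizing w with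
  | zero =>
    obtain rfl : w = 1 := by simpa [wordBall] using hw
    simp
  | succ m ih =>
    rcases mem_union.1 hw with hw | hw
    · exact (ih hw).trans (Nat.mul_le_mul_right _ m.le_succ)
    · obtain ⟨s, hs, u, hu, rfl⟩ := mem_mul.1 hw
      calc #(D \ (s * u) • D) ≤ #(D \ s • D) + #(D \ u • D) := card_sdiff_mul_smul_le D s u
        _ ≤ #(innerBoundary S D) + m * #(innerBoundary S D) :=
            add_le_add (card_sdiff_smul_le_card_innerBoundary hsymm D hs) (ih hu)
        _ = (m + 1) * #(innerBoundary S D) := by ring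

lemma sum_card_inter_smul_le (W D : Finset G) : ∑ w ∈ W, #(D ∩ w • D) ≤ #D * #D := by
  simp_rw [card_inter_smul, ← card_mul_eq, sum_card_fiberwise_eq_card_filter]
  calc _ ≤ #(D ×ˢ D⁻¹) := card_filter_le _ _
    _ = #D * #D := by rw [card_product, card_inv]

lemma card_mul_card_le_of_card_sdiff_smul_le {W D : Finset G} {k : ℕ}
    (hW : ∀ w ∈ W, #(D \ w • D) ≤ k) : #W * #D ≤ #D * #D + #W * k :=
  calc #W * #D = ∑ w ∈ W, (#(D ∩ w • D) + #(D \ w • D)) := by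
        simp [card_inter_add_card_sdiff]
    _ ≤ ∑ w ∈ W, (#(D ∩ w • D) + k) := sum_le_sum fun w hw => Nat.add_le_add_left (hW w hw) _
    _ = ∑ w ∈ W, #(D ∩ w • D) + #W * k := by rw [sum_add_distrib, sum_const, smul_eq_mul]
    _ ≤ #D * #D + #W * k := by gcongr; exact sum_card_inter_smul_le W D

lemma sub_mul_card_wordBall_le {S : Finset G} (hsymm : ∀ s ∈ S, s⁻¹ ∈ S) {D : Finset G}
    (hD : D.Nonempty) {n : ℕ} (hfol : n * #(innerBoundary S D) ≤ #D) (m : ℕ) :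
    (n - m) * #(wordBall S m) ≤ n * #D := by
  set b := #(wordBall S m)
  have hcount : b * #D ≤ #D * #D + b * (m * #(innerBoundary S D)) :=
    card_mul_card_le_of_card_sdiff_smul_le fun w hw => card_sdiff_smul_le_of_mem_wordBall hsymm D hw
  have : n * b * #D ≤ (n * #D + m * b) * #D :=
    calc n * b * #D = n * (b * #D) := by ring
      _ ≤ n * (#D * #D + b * (m * #(innerBoundary S D))) := by gcongr
      _ = n * (#D * #D) + b * m * (n * #(innerBoundary S D)) := by ring
      _ ≤ n * (#D * #D) + b * m * #D := by gcongr
      _ = (n * #D + m * b) * #D := by ring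
  rw [Nat.sub_mul, Nat.sub_le_iff_le_add]
  exact le_of_mul_le_mul_right this hD.card_pos

lemma exists_card_le_of_folner_eq {S : Finset G} {n F : ℕ} (hF : folner S n = F) :
    ∃ D : Finset G, D.Nonempty ∧ n * #(innerBoundary S D) ≤ #D ∧ #D ≤ F := by
  have hlt : folner S n < F + 1 := by rw [hF]; exact_mod_cast F.lt_succ_self
  simp only [folner, iInf_lt_iff] at hlt
  obtain ⟨D, hD, hfol, hcard⟩ := hlt
  exact ⟨D, hD, hfol, Order.lt_add_one_iff.1 (by exact_mod_cast hcard)⟩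

lemma mul_card_wordBall_le_of_folner_eq {S : Finset G} (hsymm : ∀ s ∈ S, s⁻¹ ∈ S)
    {n F m : ℕ} (hn : 0 < n) (hF : folner S n = F) {δ : ℝ} (hδ : 0 ≤ δ)
    (hm : (m : ℝ) ≤ (1 - δ) * n) : δ * #(wordBall S m) ≤ F := by
  obtain ⟨D, hD, hfol, hDF⟩ := exists_card_le_of_folner_eq hF
  have hcount : ((n - m) * #(wordBall S m) : ℕ) ≤ (n * F : ℝ) := by
    exact_mod_cast (sub_mul_card_wordBall_le hsymm hD hfol m).trans (Nat.mul_le_mul_left n hDF)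
  have hmn : m ≤ n := by exact_mod_cast hm.trans (by nlinarith : (1 - δ) * (n : ℝ) ≤ n)
  push_cast [hmn] at hcount
  refine le_of_mul_le_mul_left ?_ (by exact_mod_cast hn : (0 : ℝ) < n)
  calc (n : ℝ) * (δ * #(wordBall S m)) = δ * n * #(wordBall S m) := by ring
    _ ≤ (n - m) * #(wordBall S m) := by gcongr; linarith
    _ ≤ n * F := hcount

lemma monotoneOn_log_sub_mul_log {g g' : ℝ → ℝ} {M R : ℝ} (hR : 0 < R)
    (hgpos : ∀ r, R ≤ r → 0 < g r) (hderiv : ∀ r, R ≤ r → HasDerivAt g (g' r) r)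
    (hM : ∀ r, R ≤ r → M ≤ r * g' r / g r) :
    MonotoneOn (fun r => Real.log (g r) - M * Real.log r) (Set.Ici R) := by
  have hφ : ∀ r, R ≤ r →
      HasDerivAt (fun r => Real.log (g r) - M * Real.log r) (g' r / g r - M * r⁻¹) r :=
    fun r hr => ((hderiv r hr).log (hgpos r hr).ne').sub
      ((Real.hasDerivAt_log (by linarith)).const_mul M)
  refine monotoneOn_of_hasDerivWithinAt_nonneg (convex_Ici R)
    (fun r hr => (hφ r hr).continuousAt.continuousWithinAt)
    (fun r hr => (hφ r (interior_subset hr)).hasDerivWithinAt) fun r hr => ?_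
  have hr : R ≤ r := interior_subset hr
  have hMr := hM r hr
  rw [sub_nonneg, ← div_eq_mul_inv, div_le_iff₀ (by linarith)]
  linarith [show r * g' r / g r = g' r / g r * r by ring]

lemma eventually_le_mul_of_tendsto_mul_deriv_div_atTop {g g' : ℝ → ℝ}
    (hgpos : ∀ r, 0 < r → 0 < g r) (hderiv : ∀ r, 0 < r → HasDerivAt g (g' r) r)
    (htame : Tendsto (fun r => r * g' r / g r) atTop atTop)
    {lam δ : ℝ} (hlam0 : 0 < lam) (hlam1 : lam < 1) (hδ : 0 < δ) :
    ∀ᶠ t in atTop, g (lam * t) ≤ δ * g t := by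
  set M := Real.log δ / Real.log lam
  have hMlam : M * Real.log lam = Real.log δ :=
    div_mul_cancel₀ _ (Real.log_neg hlam0 hlam1).ne
  obtain ⟨R, hR⟩ := (htame.eventually_ge_atTop M).exists_forall_of_atTop
  have hR1 : 0 < max R 1 := by positivity
  have hmono := monotoneOn_log_sub_mul_log hR1
    (fun r hr => hgpos r (hR1.trans_le hr)) (fun r hr => hderiv r (hR1.trans_le hr))
    (fun r hr => hR r ((le_max_left _ _).trans hr))
  filter_upwards [eventually_ge_atTop (max R 1 / lam)] with t ht
  have hlt : max R 1 ≤ lam * t := by rwa [div_le_iff₀' hlam0] at ht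
  have ht0 : 0 < t := by nlinarith
  have hle : lam * t ≤ t := by nlinarith
  have key := hmono hlt (hlt.trans hle) hle
  simp only [Real.log_mul hlam0.ne' ht0.ne'] at key
  rw [← Real.log_le_log_iff (hgpos _ (by positivity)) (by have := hgpos t ht0; positivity),
    Real.log_mul hδ.ne' (hgpos t ht0).ne']
  linarith

theorem stmt13_general (S : Finset G)
    (hsymm : ∀ s ∈ S, s⁻¹ ∈ S)
    (g g' : ℝ → ℝ) (hgpos : ∀ r : ℝ, 0 < r → 0 < g r)
    (hmono : StrictMonoOn g (Set.Ioi 0))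
    (hderiv : ∀ r : ℝ, 0 < r → HasDerivAt g (g' r) r)
    (htame_top : Filter.Tendsto (fun r => r * g' r / g r) Filter.atTop Filter.atTop)
    (hgrowth : ∀ r : ℕ, 1 ≤ r → g r ≤ ((wordBall S (r - 1)).card : ℝ))
    (ε : ℝ) (hε0 : 0 < ε) (hε1 : ε < 1) :
    ∃ N : ℕ, ∀ n : ℕ, N ≤ n → ∀ F : ℕ, folner S n = (F : ℕ∞) →
      g ((1 - ε) * (n : ℝ)) ≤ (F : ℝ) := by
  obtain ⟨δ, hδ, hδε⟩ : ∃ δ, 0 < δ ∧ δ < ε := ⟨ε / 2, by positivity, by linarith⟩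
  have h1δ : 0 < 1 - δ := by linarith
  have hshrink := eventually_le_mul_of_tendsto_mul_deriv_div_atTop hgpos hderiv htame_top
    (lam := (1 - ε) / (1 - δ)) (div_pos (by linarith) h1δ)
    ((div_lt_one h1δ).2 (by linarith)) hδ
  have hev := ((tendsto_natCast_atTop_atTop.const_mul_atTop h1δ).eventually hshrink).and
    (eventually_gt_atTop 0)
  obtain ⟨N, hN⟩ := eventually_atTop.1 hev
  refine ⟨N, fun n hn F hF => ?_⟩
  obtain ⟨hle, hn0⟩ := hN n hn
  set t := (1 - δ) * (n : ℝ)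
  have ht : 0 < t := by positivity
  have hgt : g t ≤ #(wordBall S ⌊t⌋₊) :=
    (hmono.monotoneOn ht (by positivity : (0 : ℝ) < ⌊t⌋₊ + 1)
      (Nat.lt_floor_add_one t).le).trans (by simpa using hgrowth (⌊t⌋₊ + 1) le_add_self)
  calc g ((1 - ε) * n) = g ((1 - ε) / (1 - δ) * t) := by congr 1; simp only [t]; field_simp
    _ ≤ δ * g t := hle
    _ ≤ δ * #(wordBall S ⌊t⌋₊) := by gcongr
    _ ≤ F := mul_card_wordBall_le_of_folner_eq hsymm hn0 hF hδ.le (Nat.floor_le ht.le)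

theorem stmt13 (S : Finset G)
    (hsymm : ∀ s ∈ S, s⁻¹ ∈ S) (hgen : Subgroup.closure (S : Set G) = ⊤)
    (hamen : ∀ n : ℕ, folner S n ≠ ⊤)
    (g g' : ℝ → ℝ) (hgpos : ∀ r : ℝ, 0 < r → 0 < g r)
    (hmono : StrictMonoOn g (Set.Ioi 0))
    (hderiv : ∀ r : ℝ, 0 < r → HasDerivAt g (g' r) r)
    (hg'pos : ∀ r : ℝ, 0 < r → 0 < g' r)
    (htame_top : Filter.Tendsto (fun r => r * g' r / g r) Filter.atTop Filter.atTop)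
    (htame_zero : ∀ lam : ℝ, 0 < lam → lam < 1 →
      Filter.Tendsto (fun r => r * g' r * g (lam * r) / (g r) ^ 2)
        Filter.atTop (nhds 0))
    (hgrowth : ∀ r : ℕ, 1 ≤ r → g r ≤ ((wordBall S (r - 1)).card : ℝ))
    (ε : ℝ) (hε0 : 0 < ε) (hε1 : ε < 1) :
    ∃ N : ℕ, ∀ n : ℕ, N ≤ n → ∀ F : ℕ, folner S n = (F : ℕ∞) →
      g ((1 - ε) * (n : ℝ)) ≤ (F : ℝ) :=
  stmt13_general S hsymm g g' hgpos hmono hderiv htame_top hgrowth ε hε0 hε1
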